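/- arXiv:1410.1113 — 9 statements merged into one kernel-verified Lean document; each statement's English description precedes it below -/
import Mathlib

section
/- Let λ : (0,T] → ℝ be positive, non-increasing, and differentiable, and suppose x ↦ x·|λ'(x)|/λ(x) is non-decreasing (MPE property). Fix x̃ ∈ (0,T] with λ(x̃) ≥ x̃·|λ'(x̃)|. Then for all x with 0 < x < x̃: λ(x̃) − λ(x) ≤ x̃·|λ'(x̃)| − x·|λ'(x)|. -/
theorem sub_le_sub_of_div_le_div_of_le {K : Type*} [Field K] [LinearOrder K] [IsStrictOrderedRing K]
    {a b c d : K} (ha : 0 < a) (hab : a ≤ b) (hca : c ≤ a) (h : d / b ≤ c / a) :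
    a - b ≤ c - d := by
  have hb : 0 < b := ha.trans_le hab
  have hc_div : c / a ≤ 1 := (div_le_one ha).2 hca
  have hd : d ≤ c + (b - a) := calc
    d = d / b * b := (div_mul_cancel₀ d hb.ne').symm
    _ ≤ c / a * b := mul_le_mul_of_nonneg_right h hb.le
    _ = c + (b - a) * (c / a) := by field_simp; ring
    _ ≤ c + (b - a) := by gcongr; exact mul_le_of_le_one_right (sub_nonneg.2 hab) hc_div
  linarith

theorem mpe_comparison_below_general
    (T : ℝ) (lam : ℝ → ℝ)
    (hpos : ∀ x ∈ Set.Ioc 0 T, 0 < lam x)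
    (hanti : AntitoneOn lam (Set.Ioc 0 T))
    (hMPE : MonotoneOn (fun x => x * |deriv lam x| / lam x) (Set.Ioc 0 T))
    (xt : ℝ) (hxt : xt ∈ Set.Ioc 0 T)
    (hcond : xt * |deriv lam xt| ≤ lam xt) :
    ∀ x, 0 < x → x < xt →
      lam xt - lam x ≤ xt * |deriv lam xt| - x * |deriv lam x| := by
  intro x hx hxlt
  have hxT : x ∈ Set.Ioc 0 T := ⟨hx, hxlt.le.trans hxt.2⟩
  exact sub_le_sub_of_div_le_div_of_le (hpos xt hxt) (hanti hxT hxt hxlt.le) hcond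
    (hMPE hxT hxt hxlt.le)

/-- MPE comparison, small-`x` direction: for a positive, non-increasing, differentiable
inverse demand `lam` on `(0,T]` with monotone price elasticity, and `x̃` with
`lam x̃ ≥ x̃·|lam' x̃|`, for all `0 < x < x̃` we have
`lam x̃ − lam x ≤ x̃·|lam' x̃| − x·|lam' x|`. -/
theorem mpe_comparison_below
    (T : ℝ) (hT : 0 < T) (lam : ℝ → ℝ)
    (hpos : ∀ x ∈ Set.Ioc 0 T, 0 < lam x)
    (hanti : AntitoneOn lam (Set.Ioc 0 T))
    (hdiff : ∀ x ∈ Set.Ioc 0 T, DifferentiableAt ℝ lam x)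
    (hMPE : MonotoneOn (fun x => x * |deriv lam x| / lam x) (Set.Ioc 0 T))
    (xt : ℝ) (hxt : xt ∈ Set.Ioc 0 T)
    (hcond : xt * |deriv lam xt| ≤ lam xt) :
    ∀ x, 0 < x → x < xt →
      lam xt - lam x ≤ xt * |deriv lam xt| - x * |deriv lam x| :=
  mpe_comparison_below_general T lam hpos hanti hMPE xt hxt hcond
end

section
/- Let λ : (0,T] → ℝ be positive, non-increasing, and differentiable with x ↦ x·|λ'(x)|/λ(x) non-decreasing (MPE). Fix x̃ ∈ (0,T] with λ(x̃) ≥ x̃·|λ'(x̃)|. Then for all x with x̃ < x ≤ T: λ(x̃) − λ(x) ≥ x̃·|λ'(x̃)| − x·|λ'(x)|. -/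
theorem sub_le_sub_of_div_le_div {K : Type*} [Field K] [LinearOrder K] [IsStrictOrderedRing K]
    {a b L l : K} (hl : 0 < l) (hlL : l ≤ L) (haL : a ≤ L) (h : a / L ≤ b / l) :
    a - b ≤ L - l := by
  have hL : 0 < L := hl.trans_le hlL
  have hb : a / L * l ≤ b := (le_div_iff₀ hl).mp h
  calc a - b ≤ a - a / L * l := by linarith
    _ = a * (L - l) / L := by field_simp
    _ ≤ L * (L - l) / L := by gcongr
    _ = L - l := by field_simp

theorem mpe_comparison_above_general
    (T : ℝ) (lam : ℝ → ℝ)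
    (hpos : ∀ x ∈ Set.Ioc 0 T, 0 < lam x)
    (hanti : AntitoneOn lam (Set.Ioc 0 T))
    (hMPE : MonotoneOn (fun x => x * |deriv lam x| / lam x) (Set.Ioc 0 T))
    (xt : ℝ) (hxt : xt ∈ Set.Ioc 0 T)
    (hcond : xt * |deriv lam xt| ≤ lam xt) :
    ∀ x, xt < x → x ≤ T →
      xt * |deriv lam xt| - x * |deriv lam x| ≤ lam xt - lam x := by
  intro x hlt hle
  have hx : x ∈ Set.Ioc 0 T := ⟨hxt.1.trans hlt, hle⟩
  exact sub_le_sub_of_div_le_div (hpos x hx) (hanti hxt hx hlt.le) hcond (hMPE hxt hx hlt.le)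

/-- MPE comparison, large-`x` direction: for a positive, non-increasing, differentiable
inverse demand `lam` on `(0,T]` with monotone price elasticity, and `x̃` with
`lam x̃ ≥ x̃·|lam' x̃|`, for all `x̃ < x ≤ T` we have
`lam x̃ − lam x ≥ x̃·|lam' x̃| − x·|lam' x|`. -/
theorem mpe_comparison_above
    (T : ℝ) (hT : 0 < T) (lam : ℝ → ℝ)
    (hpos : ∀ x ∈ Set.Ioc 0 T, 0 < lam x)
    (hanti : AntitoneOn lam (Set.Ioc 0 T))
    (hdiff : ∀ x ∈ Set.Ioc 0 T, DifferentiableAt ℝ lam x)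
    (hMPE : MonotoneOn (fun x => x * |deriv lam x| / lam x) (Set.Ioc 0 T))
    (xt : ℝ) (hxt : xt ∈ Set.Ioc 0 T)
    (hcond : xt * |deriv lam xt| ≤ lam xt) :
    ∀ x, xt < x → x ≤ T →
      xt * |deriv lam xt| - x * |deriv lam x| ≤ lam xt - lam x :=
  mpe_comparison_above_general T lam hpos hanti hMPE xt hxt hcond
end

section
/- Let λ : [0,T] → ℝ be positive, non-increasing, differentiable, with hazard rate h(x) = |λ'(x)|/λ(x) non-decreasing (MHR). Let r : [0,T] → ℝ be non-negative, non-decreasing, and continuous, and let x* ≤ T satisfy λ(x) ≥ r(x) for all x ≤ x*. Then the function x ↦ |λ'(x)|/(λ(x) − r(x)) is non-decreasing on [0,x*) wherever λ(x) > r(x). -/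
/-!
Factor `|λ'| / (λ - r) = (|λ'| / λ) · (λ / (λ - r))`. The first factor is the hazard rate,
non-decreasing by hypothesis; the second is `1 / (1 - r / λ)`, non-decreasing because `r / λ` is
(`r ≥ 0` grows while `λ > r` shrinks). Both factors are non-negative, so their product is
non-decreasing.
-/

theorem monotoneOn_div_sub_of_antitoneOn {α 𝕜 : Type*} [Preorder α] [Field 𝕜] [LinearOrder 𝕜]
    [IsStrictOrderedRing 𝕜] {s : Set α} {f g : α → 𝕜} (hf : AntitoneOn f s)
    (hg : MonotoneOn g s) (hg₀ : ∀ x ∈ s, 0 ≤ g x) (hgf : ∀ x ∈ s, g x < f x) :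
    MonotoneOn (fun x => f x / (f x - g x)) s := by
  intro x hx y hy hxy
  have hfx : f y ≤ f x := hf hx hy hxy
  have hgy : g x ≤ g y := hg hx hy hxy
  have hcross : f y * g x ≤ f x * g y :=
    mul_le_mul hfx hgy (hg₀ x hx) ((hg₀ y hy).trans (hgf y hy).le |>.trans hfx)
  rw [div_le_div_iff₀ (sub_pos.mpr (hgf x hx)) (sub_pos.mpr (hgf y hy))]
  linarith

theorem mhr_hazard_with_cost_monotone_general
    (T : ℝ) (lam r : ℝ → ℝ)
    (hanti : AntitoneOn lam (Set.Icc 0 T))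
    (hMHR : MonotoneOn (fun x => |deriv lam x| / lam x) (Set.Icc 0 T))
    (hr0 : ∀ x ∈ Set.Icc 0 T, 0 ≤ r x)
    (hrmono : MonotoneOn r (Set.Icc 0 T))
    (xs : ℝ) (hxs : xs ≤ T) :
    MonotoneOn (fun x => |deriv lam x| / (lam x - r x))
      {x | x ∈ Set.Ico 0 xs ∧ r x < lam x} := by
  set S := {x | x ∈ Set.Ico 0 xs ∧ r x < lam x}
  have hS : S ⊆ Set.Icc 0 T := fun x hx => ⟨hx.1.1, hx.1.2.le.trans hxs⟩
  have hr0S : ∀ x ∈ S, 0 ≤ r x := fun x hx => hr0 x (hS hx)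
  have hlam : ∀ x ∈ S, 0 < lam x := fun x hx => (hr0S x hx).trans_lt hx.2
  have hfactor : S.EqOn
      ((fun x => |deriv lam x| / lam x) * fun x => lam x / (lam x - r x))
      (fun x => |deriv lam x| / (lam x - r x)) := fun x hx => by
    have : lam x ≠ 0 := (hlam x hx).ne'
    simp only [Pi.mul_apply]
    rw [div_mul_div_cancel₀ this]
  refine MonotoneOn.congr ?_ hfactor
  exact (hMHR.mono hS).mul
    (monotoneOn_div_sub_of_antitoneOn (hanti.mono hS) (hrmono.mono hS) hr0S fun x hx => hx.2)
    (fun x hx => div_nonneg (abs_nonneg _) (hlam x hx).le)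
    (fun x hx => div_nonneg (hlam x hx).le (sub_pos.mpr hx.2).le)

/-- If the inverse demand `lam` has a monotone hazard rate on `[0,T]` and `r` is a
non-negative, non-decreasing, continuous marginal cost with `lam x ≥ r x` for `x ≤ x*`,
then `x ↦ |lam' x| / (lam x − r x)` is non-decreasing on `[0,x*)` wherever `lam x > r x`. -/
theorem mhr_hazard_with_cost_monotone
    (T : ℝ) (hT : 0 < T) (lam r : ℝ → ℝ)
    (hpos : ∀ x ∈ Set.Icc 0 T, 0 < lam x)
    (hanti : AntitoneOn lam (Set.Icc 0 T))
    (hdiff : ∀ x ∈ Set.Icc 0 T, DifferentiableAt ℝ lam x)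
    (hMHR : MonotoneOn (fun x => |deriv lam x| / lam x) (Set.Icc 0 T))
    (hr0 : ∀ x ∈ Set.Icc 0 T, 0 ≤ r x)
    (hrmono : MonotoneOn r (Set.Icc 0 T))
    (hrcont : ContinuousOn r (Set.Icc 0 T))
    (xs : ℝ) (hxs : xs ≤ T) (hxs0 : 0 ≤ xs)
    (hopt : ∀ x, 0 ≤ x → x ≤ xs → r x ≤ lam x) :
    MonotoneOn (fun x => |deriv lam x| / (lam x - r x))
      {x | x ∈ Set.Ico 0 xs ∧ r x < lam x} :=
  mhr_hazard_with_cost_monotone_general T lam r hanti hMHR hr0 hrmono xs hxs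
end

section
/- Let λ : [0,∞) → ℝ be positive, non-increasing, differentiable with |λ'(x)|/λ(x) non-decreasing (MHR), and let r be non-negative non-decreasing with λ(x) ≥ r(x) on [0,x*]. Suppose x̃ ∈ (0,x*] satisfies λ(x̃) − r(x̃) = M·x̃·|λ'(x̃)| for some integer M ≥ 1. Then ∫₀^{x*}(λ(x) − r(x)) dx ≤ (1 + M) · ∫₀^{x̃}(λ(x) − r(x)) dx. -/
/-!
Write `A = λ(x̃)`, `B = r(x̃)` and `c = |λ'(x̃)| / A`. Since `λ - r` is non-increasing, the
welfare on `[0, x̃]` is at least `(A - B) x̃`. On `[x̃, x*]` the MHR condition gives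
`λ' ≤ -c λ`, hence `λ(x) ≤ A e^{-c (x - x̃)}`, while `r ≥ B`; so the welfare on `[x̃, x*]` is at
most `(A / c) (1 - e^{-s} - (B / A) s)` for some `s`, and maximizing over `s` gives at most
`(A - B)² / (c A)`, which the equilibrium condition `A - B = M x̃ c A` turns into `M (A - B) x̃`.
-/

open Real Set MeasureTheory

theorem le_mul_exp_neg_of_deriv_le_neg_mul {f : ℝ → ℝ} {a c : ℝ}
    (hf : ∀ x, a ≤ x → DifferentiableAt ℝ f x) (hf' : ∀ x, a < x → deriv f x ≤ -c * f x)
    {x : ℝ} (hx : a ≤ x) : f x ≤ f a * exp (-(c * (x - a))) := by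
  have hderiv : ∀ y, a ≤ y → HasDerivAt (fun y => f y * exp (c * y))
      (deriv f y * exp (c * y) + f y * (exp (c * y) * (c * 1))) y := fun y hy =>
    (hf y hy).hasDerivAt.mul ((hasDerivAt_id' y).const_mul c).exp
  have hanti : AntitoneOn (fun y => f y * exp (c * y)) (Ici a) := by
    refine antitoneOn_of_deriv_nonpos (convex_Ici a)
      (fun y hy => (hderiv y hy).continuousAt.continuousWithinAt) ?_ ?_ <;>
      rw [interior_Ici] <;> intro y hy
    · exact (hderiv y (le_of_lt hy)).differentiableAt.differentiableWithinAt
    · rw [(hderiv y (le_of_lt hy)).deriv]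
      nlinarith [hf' y hy, exp_pos (c * y)]
  have := hanti self_mem_Ici hx hx
  rw [← le_div_iff₀ (exp_pos _), mul_div_assoc, ← exp_sub] at this
  rwa [show -(c * (x - a)) = c * a - c * x by ring]

theorem one_sub_exp_neg_sub_mul_le_sq (s : ℝ) {v : ℝ} (hv : 0 ≤ v) :
    1 - exp (-s) - v * s ≤ (1 - v) ^ 2 := by
  rcases hv.eq_or_lt with rfl | hv
  · nlinarith [exp_pos (-s)]
  · -- the tangent line of `exp` at `log v`, then `log v ≤ v - 1`
    have htangent : v * (1 + (-s - log v)) ≤ exp (-s) := by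
      have := add_one_le_exp (-s - log v)
      rw [exp_sub, exp_log hv, le_div_iff₀ hv] at this
      linarith
    nlinarith [mul_le_mul_of_nonneg_left (log_le_sub_one_of_pos hv) hv.le]

theorem integral_mul_exp_neg_sub_const {A B c : ℝ} (hc : c ≠ 0) (a b : ℝ) :
    ∫ x in a..b, (A * exp (-(c * (x - a))) - B) =
      A / c * (1 - exp (-(c * (b - a)))) - B * (b - a) := by
  have hderiv : ∀ x ∈ uIcc a b, HasDerivAt (fun y => -(A / c) * exp (-(c * (y - a))) - B * y)
      (A * exp (-(c * (x - a))) - B) x := by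
    intro x _
    have hexp : HasDerivAt (fun y => exp (-(c * (y - a)))) (exp (-(c * (x - a))) * -(c * 1)) x :=
      (((hasDerivAt_id' x).sub_const a).const_mul c).neg.exp
    refine ((hexp.const_mul (-(A / c))).sub ((hasDerivAt_id' x).const_mul B)).congr_deriv ?_
    field_simp
  rw [intervalIntegral.integral_eq_sub_of_hasDerivAt hderiv
    (by apply Continuous.intervalIntegrable; fun_prop)]
  simp only [neg_mul, sub_self, mul_zero, neg_zero, exp_zero, mul_one]
  ring

theorem integral_mul_exp_neg_sub_const_le {A B c m : ℝ} (a b : ℝ) (hA : 0 < A) (hB : 0 ≤ B)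
    (hc : 0 ≤ c) (hAB : A - B = m * c * A) :
    ∫ x in a..b, (A * exp (-(c * (x - a))) - B) ≤ m * (A - B) := by
  rcases hc.eq_or_lt with rfl | hc
  · obtain rfl : B = A := by linarith
    simp
  · rw [integral_mul_exp_neg_sub_const hc.ne']
    have hkey := mul_le_mul_of_nonneg_left
      (one_sub_exp_neg_sub_mul_le_sq (c * (b - a)) (div_nonneg hB hA.le)) (div_pos hA hc).le
    have hv : 1 - B / A = m * c := by field_simp; linarith
    rw [hv] at hkey
    have : A / c * (m * c) ^ 2 = m * (A - B) := by rw [hAB]; field_simp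
    calc A / c * (1 - exp (-(c * (b - a)))) - B * (b - a)
        = A / c * (1 - exp (-(c * (b - a))) - B / A * (c * (b - a))) := by field_simp
      _ ≤ m * (A - B) := by linarith

theorem AntitoneOn.mul_sub_le_integral {f : ℝ → ℝ} {a b : ℝ} (hab : a ≤ b)
    (hf : AntitoneOn f (Icc a b)) : f b * (b - a) ≤ ∫ x in a..b, f x := by
  have := intervalIntegral.integral_mono_on hab (intervalIntegrable_const (μ := volume))
    (AntitoneOn.intervalIntegrable (by rwa [uIcc_of_le hab]))
    fun x hx => hf hx (right_mem_Icc.2 hab) hx.2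
  rwa [intervalIntegral.integral_const, smul_eq_mul, mul_comm] at this

theorem efficiency_bound_mhr_general
    (lam r : ℝ → ℝ)
    (hpos : ∀ x, 0 ≤ x → 0 < lam x)
    (hanti : AntitoneOn lam (Set.Ici 0))
    (hdiff : ∀ x, 0 ≤ x → DifferentiableAt ℝ lam x)
    (hMHR : MonotoneOn (fun x => |deriv lam x| / lam x) (Set.Ici 0))
    (hr0 : ∀ x, 0 ≤ x → 0 ≤ r x)
    (hrmono : MonotoneOn r (Set.Ici 0))
    (xs : ℝ)
    (M : ℕ)
    (xt : ℝ) (hxt : xt ∈ Set.Ioc 0 xs)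
    (heq : lam xt - r xt = M * xt * |deriv lam xt|) :
    ∫ x in (0:ℝ)..xs, (lam x - r x) ≤
      (1 + (M : ℝ)) * ∫ x in (0:ℝ)..xt, (lam x - r x) := by
  obtain ⟨hxt0, hxtxs⟩ := hxt
  have hA : 0 < lam xt := hpos xt hxt0.le
  set c := |deriv lam xt| / lam xt
  have hsurplus : AntitoneOn (fun x => lam x - r x) (Ici 0) := fun x hx y hy hxy =>
    sub_le_sub (hanti hx hy hxy) (hrmono hx hy hxy)
  have hintegrable : ∀ a b, 0 ≤ a → a ≤ b →
      IntervalIntegrable (fun x => lam x - r x) volume a b := fun a b ha hab =>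
    (hsurplus.mono fun x hx => ha.trans (uIcc_of_le hab ▸ hx).1).intervalIntegrable
  have hhead : (lam xt - r xt) * xt ≤ ∫ x in (0:ℝ)..xt, (lam x - r x) := by
    simpa using (hsurplus.mono Icc_subset_Ici_self).mul_sub_le_integral hxt0.le
  -- MHR: beyond `xt` the hazard rate `-lam' / lam` is at least its value `c` at `xt`
  have hdecay : ∀ x, xt ≤ x → lam x ≤ lam xt * exp (-(c * (x - xt))) :=
    fun x => le_mul_exp_neg_of_deriv_le_neg_mul (fun y hy => hdiff y (hxt0.le.trans hy))
      fun y hy => by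
        have hy0 : 0 < y := hxt0.trans hy
        have hderiv : deriv lam y ≤ 0 := by
          rw [← derivWithin_of_isOpen isOpen_Ioi hy0]
          exact (hanti.mono Ioi_subset_Ici_self).derivWithin_nonpos
        have : c ≤ |deriv lam y| / lam y := hMHR hxt0.le hy0.le hy.le
        rw [abs_of_nonpos hderiv, le_div_iff₀ (hpos y hy0.le)] at this
        linarith
  have htail : ∫ x in xt..xs, (lam x - r x) ≤
      ∫ x in xt..xs, (lam xt * exp (-(c * (x - xt))) - r xt) :=
    intervalIntegral.integral_mono_on hxtxs (hintegrable xt xs hxt0.le hxtxs)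
      (by apply Continuous.intervalIntegrable; fun_prop)
      fun x hx => sub_le_sub (hdecay x hx.1) (hrmono hxt0.le (hxt0.le.trans hx.1) hx.1)
  have htail_bound := integral_mul_exp_neg_sub_const_le (m := M * xt) xt xs hA
    (hr0 xt hxt0.le) (div_nonneg (abs_nonneg _) hA.le)
    (by rw [heq, mul_assoc (↑M * xt), div_mul_cancel₀ _ hA.ne'])
  rw [← intervalIntegral.integral_add_adjacent_intervals
    (hintegrable 0 xt le_rfl hxt0.le) (hintegrable xt xs hxt0.le hxtxs)]
  linarith [mul_le_mul_of_nonneg_left hhead (Nat.cast_nonneg (α := ℝ) M)]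

/-- Efficiency bound `1 + M` for MHR inverse demand: if the equilibrium magnitude `x̃`
satisfies `lam x̃ − r x̃ = M·x̃·|lam' x̃|`, the welfare at the optimum `x*` is at most
`(1+M)` times the welfare at `x̃`. -/
theorem efficiency_bound_mhr
    (lam r : ℝ → ℝ)
    (hpos : ∀ x, 0 ≤ x → 0 < lam x)
    (hanti : AntitoneOn lam (Set.Ici 0))
    (hdiff : ∀ x, 0 ≤ x → DifferentiableAt ℝ lam x)
    (hMHR : MonotoneOn (fun x => |deriv lam x| / lam x) (Set.Ici 0))
    (hr0 : ∀ x, 0 ≤ x → 0 ≤ r x)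
    (hrmono : MonotoneOn r (Set.Ici 0))
    (xs : ℝ) (hxs0 : 0 ≤ xs)
    (hopt : ∀ x, 0 ≤ x → x ≤ xs → r x ≤ lam x)
    (M : ℕ) (hM : 1 ≤ M)
    (xt : ℝ) (hxt : xt ∈ Set.Ioc 0 xs)
    (heq : lam xt - r xt = M * xt * |deriv lam xt|) :
    ∫ x in (0:ℝ)..xs, (lam x - r x) ≤
      (1 + (M : ℝ)) * ∫ x in (0:ℝ)..xt, (lam x - r x) :=
  efficiency_bound_mhr_general lam r hpos hanti hdiff hMHR hr0 hrmono xs M xt hxt heq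
end

section
/- Let λ(x) = λ₀(1 − x^α) for constants λ₀ > 0 and α ≥ 1, defined on [0,1]. Let r be non-negative and non-decreasing. Suppose x̃ ∈ (0,1) satisfies λ(x̃) − r(x̃) = M·x̃·|λ'(x̃)| for an integer M ≥ 1, and x* satisfies λ(x*) ≥ r(x*). Then x*/x̃ ≤ (1 + Mα)^{1/α}. -/
/-!
Along the demand curve, `x |λ'(x)| = λ₀ α x^α`, so the equilibrium condition says
`r(x̃) = λ₀ (1 - (1 + Mα) x̃^α)`. If `x* > x̃`, monotonicity of `r` gives
`λ₀ (1 - x*^α) ≥ r(x*) ≥ r(x̃)`, i.e. `x*^α ≤ (1 + Mα) x̃^α`; this also holds trivially when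
`x* ≤ x̃`. Taking `α`-th roots gives the bound.
-/

open Set

namespace Real

theorem le_rpow_inv_mul_of_rpow_le_mul_rpow {x y c a : ℝ} (hx : 0 ≤ x) (hy : 0 ≤ y) (hc : 0 ≤ c)
    (ha : 0 < a) (h : x ^ a ≤ c * y ^ a) : x ≤ c ^ a⁻¹ * y := by
  have hroot : c ^ a⁻¹ * y = (c * y ^ a) ^ a⁻¹ := by
    rw [mul_rpow hc (by positivity), rpow_rpow_inv hy ha.ne']
  rw [hroot, le_rpow_inv_iff_of_pos hx (by positivity) ha]
  exact h

theorem mul_abs_deriv_eq_of_eventuallyEq_const_mul_one_sub_rpow {f : ℝ → ℝ} {c a x : ℝ}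
    (hc : 0 ≤ c) (ha : 0 ≤ a) (hx : 0 < x) (hf : f =ᶠ[nhds x] fun y => c * (1 - y ^ a)) :
    x * |deriv f x| = c * a * x ^ a := by
  have hderiv : HasDerivAt (fun y => c * (1 - y ^ a)) (c * (0 - a * x ^ (a - 1))) x :=
    ((hasDerivAt_const x 1).sub (hasDerivAt_rpow_const (Or.inl hx.ne'))).const_mul c
  rw [hf.deriv_eq, hderiv.deriv, zero_sub, mul_neg, abs_neg, abs_of_nonneg (by positivity),
    rpow_sub_one hx.ne']
  field_simp

end Real

theorem rpow_le_of_le_const_mul_one_sub_rpow {r : ℝ → ℝ} {c a K xt xs : ℝ} {s : Set ℝ}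
    (hc : 0 < c) (ha : 0 ≤ a) (hK : 0 ≤ K) (hr : MonotoneOn r s)
    (hxt : xt ∈ s) (hxs : xs ∈ s) (hxt0 : 0 ≤ xt) (hxs0 : 0 ≤ xs)
    (heq : r xt = c * (1 - (1 + K) * xt ^ a)) (hopt : r xs ≤ c * (1 - xs ^ a)) :
    xs ^ a ≤ (1 + K) * xt ^ a := by
  rcases le_or_gt xs xt with hle | hlt
  · have hpow : xs ^ a ≤ xt ^ a := Real.rpow_le_rpow hxs0 hle ha
    nlinarith [Real.rpow_nonneg hxt0 a]
  · have hrle : r xt ≤ r xs := hr hxt hxs hlt.le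
    nlinarith

theorem ratio_bound_poly_demand_general
    (lam r : ℝ → ℝ) (lam0 a : ℝ) (hlam0 : 0 < lam0) (ha : 1 ≤ a)
    (hlam : ∀ x ∈ Set.Icc (0:ℝ) 1, lam x = lam0 * (1 - x ^ a))
    (hrmono : MonotoneOn r (Set.Icc (0:ℝ) 1))
    (M : ℕ)
    (xt : ℝ) (hxt : xt ∈ Set.Ioo (0:ℝ) 1)
    (heq : lam xt - r xt = M * xt * |deriv lam xt|)
    (xs : ℝ) (hxs : xs ∈ Set.Icc (0:ℝ) 1)
    (hopt : r xs ≤ lam xs) :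
    xs / xt ≤ (1 + (M : ℝ) * a) ^ (1 / a) := by
  obtain ⟨hxt0, hxt1⟩ := hxt
  have ha0 : 0 < a := one_pos.trans_le ha
  have hxtIcc : xt ∈ Icc (0:ℝ) 1 := ⟨hxt0.le, hxt1.le⟩
  have hMa : 0 ≤ (M : ℝ) * a := by positivity
  have hlam_near : lam =ᶠ[nhds xt] fun x => lam0 * (1 - x ^ a) := by
    filter_upwards [Ioo_mem_nhds hxt0 hxt1] with x hx
    exact hlam x ⟨hx.1.le, hx.2.le⟩
  have hslope := Real.mul_abs_deriv_eq_of_eventuallyEq_const_mul_one_sub_rpow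
    hlam0.le ha0.le hxt0 hlam_near
  have hr_xt : r xt = lam0 * (1 - (1 + M * a) * xt ^ a) := by
    linear_combination -heq + hlam xt hxtIcc - (M : ℝ) * hslope
  have hpow := rpow_le_of_le_const_mul_one_sub_rpow hlam0 ha0.le hMa hrmono hxtIcc hxs
    hxt0.le hxs.1 hr_xt (hlam xs hxs ▸ hopt)
  rw [div_le_iff₀ hxt0, one_div]
  exact Real.le_rpow_inv_mul_of_rpow_le_mul_rpow hxs.1 hxt0.le (by positivity) ha0 hpow

/-- For polynomial concave inverse demand `lam x = λ₀ (1 − x^α)` with `α ≥ 1`, the ratio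
of the optimal magnitude `x*` to the equilibrium magnitude `x̃` is at most
`(1 + M α)^(1/α)`. -/
theorem ratio_bound_poly_demand
    (lam r : ℝ → ℝ) (lam0 a : ℝ) (hlam0 : 0 < lam0) (ha : 1 ≤ a)
    (hlam : ∀ x ∈ Set.Icc (0:ℝ) 1, lam x = lam0 * (1 - x ^ a))
    (hr0 : ∀ x ∈ Set.Icc (0:ℝ) 1, 0 ≤ r x)
    (hrmono : MonotoneOn r (Set.Icc (0:ℝ) 1))
    (M : ℕ) (hM : 1 ≤ M)
    (xt : ℝ) (hxt : xt ∈ Set.Ioo (0:ℝ) 1)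
    (heq : lam xt - r xt = M * xt * |deriv lam xt|)
    (xs : ℝ) (hxs : xs ∈ Set.Icc (0:ℝ) 1)
    (hopt : r xs ≤ lam xs) :
    xs / xt ≤ (1 + (M : ℝ) * a) ^ (1 / a) :=
  ratio_bound_poly_demand_general lam r lam0 a hlam0 ha hlam hrmono M xt hxt heq xs hxs hopt
end

section
/- Let λ(x) = λ₀(1−x)^α on [0,1] with λ₀ > 0, α ≥ 1, and let r be non-negative and non-decreasing with r(x̃) = λ(x̃) − M·α·x̃·λ₀(1−x̃)^{α−1} for some x̃ ∈ (0,1) and integer M ≥ 1 (equilibrium condition). Let x* ∈ [x̃,1] satisfy λ(x*) ≥ r(x*). Then ∫₀^{x*}(λ(x) − r(x))dx ≤ (1 + M·α/(α+1)) · ∫₀^{x̃}(λ(x) − r(x))dx. -/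
/-!
Because `r` is nondecreasing, replacing it by the constant `ρ = r x̃` lowers the surplus on
`[0, x̃]` and raises it on `[x̃, x*]`, so it suffices to treat a flat cost `ρ = λ₀ s^α`. The
surplus beyond `x̃` is then at most its value at the crossing point `1 - s`, both integrals are
explicit, and the ratio bound comes from the tangent-line (Bernoulli) inequality for `t ↦ t^α`,
used at `1 - x̃` with exponents `α` and `α + 1`.
-/

open Real Set intervalIntegral
open MeasureTheory (volume)

lemma rpow_add_mul_rpow_sub_one_mul_sub_le {s u a : ℝ} (hs : 0 ≤ s) (hu : 0 < u)
    (ha : 1 ≤ a) : u ^ a + a * u ^ (a - 1) * (s - u) ≤ s ^ a := by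
  have hbern := one_add_mul_self_le_rpow_one_add
    (by linarith [div_nonneg hs hu.le] : (-1 : ℝ) ≤ s / u - 1) ha
  rw [add_sub_cancel, div_rpow hs hu.le, le_div_iff₀ (rpow_pos_of_pos hu a)] at hbern
  have hua : u ^ a = u ^ (a - 1) * u := by
    rw [← rpow_add_one hu.ne', sub_add_cancel]
  calc u ^ a + a * u ^ (a - 1) * (s - u)
      = (1 + a * (s / u - 1)) * u ^ a := by rw [hua]; field_simp
    _ ≤ s ^ a := hbern

lemma rpow_mul_sub_le_sq {s u a : ℝ} (hs : 0 ≤ s) (hu : 0 < u) (ha : 1 ≤ a) :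
    u ^ (a - 1) * (u ^ (a + 1) - s ^ (a + 1) - (a + 1) * (u - s) * s ^ a)
      ≤ (u ^ a - s ^ a) ^ 2 := by
  have htan := rpow_add_mul_rpow_sub_one_mul_sub_le hs hu ha
  have hua : u ^ a = u ^ (a - 1) * u := by rw [← rpow_add_one hu.ne', sub_add_cancel]
  rw [rpow_add_one hu.ne', rpow_add_one' hs (by linarith)]
  have hfactor : (u ^ a - s ^ a) ^ 2
        - u ^ (a - 1) * (u ^ a * u - s ^ a * s - (a + 1) * (u - s) * s ^ a)
      = s ^ a * (s ^ a - (u ^ a + a * u ^ (a - 1) * (s - u))) := by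
    linear_combination (u ^ a - s ^ a) * hua
  linarith [mul_nonneg (rpow_nonneg hs a) (sub_nonneg.2 htan)]

/-- In the variable `t = 1 - x`, the left side is `∫ t in s..u, (t^a - s^a)` and the bracket on
the right is `∫ t in u..1, (t^a - s^a)`; `h` is the equilibrium condition at `u = 1 - x̃`. -/
lemma rpow_surplus_le {s u a c : ℝ} (hs : 0 ≤ s) (hu : 0 < u) (ha : 1 ≤ a) (hc : 0 ≤ c)
    (h : u ^ a - s ^ a = c * (1 - u) * u ^ (a - 1)) :
    (u ^ (a + 1) - s ^ (a + 1)) / (a + 1) - (u - s) * s ^ a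
      ≤ c / (a + 1) * ((1 - u ^ (a + 1)) / (a + 1) - (1 - u) * s ^ a) := by
  have ha1 : 0 < a + 1 := by linarith
  have hlow : (1 - u) * (u ^ a - s ^ a) ≤ (1 - u ^ (a + 1)) / (a + 1) - (1 - u) * s ^ a := by
    have := rpow_add_mul_rpow_sub_one_mul_sub_le zero_le_one hu (by linarith : 1 ≤ a + 1)
    rw [one_rpow, add_sub_cancel_right] at this
    rw [le_sub_iff_add_le, le_div_iff₀ ha1]
    linarith
  have hup : (u ^ (a + 1) - s ^ (a + 1) - (a + 1) * (u - s) * s ^ a) * u ^ (a - 1)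
      ≤ c * (1 - u) * (u ^ a - s ^ a) * u ^ (a - 1) := by
    calc _ = u ^ (a - 1) * (u ^ (a + 1) - s ^ (a + 1) - (a + 1) * (u - s) * s ^ a) :=
          mul_comm _ _
      _ ≤ (u ^ a - s ^ a) ^ 2 := rpow_mul_sub_le_sq hs hu ha
      _ = _ := by rw [sq]; nth_rw 1 [h]; ring
  have hup' := le_of_mul_le_mul_right hup (rpow_pos_of_pos hu _)
  rw [div_mul_eq_mul_div, le_div_iff₀ ha1, sub_mul, div_mul_cancel₀ _ ha1.ne']
  linarith [mul_le_mul_of_nonneg_left hlow hc]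

lemma continuous_one_sub_rpow {a : ℝ} (ha : 0 ≤ a) : Continuous fun x : ℝ => (1 - x) ^ a :=
  (continuous_const.sub continuous_id).rpow_const fun _ => Or.inr ha

lemma integral_one_sub_rpow {p q a : ℝ} (ha : -1 < a) :
    ∫ x in p..q, (1 - x) ^ a = ((1 - p) ^ (a + 1) - (1 - q) ^ (a + 1)) / (a + 1) := by
  rw [integral_comp_sub_left (fun x => x ^ a), integral_rpow (Or.inl ha)]

lemma integral_le_integral_of_sign_change {g : ℝ → ℝ} {p q z : ℝ}
    (hq : IntervalIntegrable g volume p q) (hz : IntervalIntegrable g volume p z)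
    (hpos : ∀ x ∈ Icc q z, 0 ≤ g x) (hneg : ∀ x ∈ Icc z q, g x ≤ 0) :
    ∫ x in p..q, g x ≤ ∫ x in p..z, g x := by
  rw [← sub_nonneg, integral_interval_sub_left hz hq]
  rcases le_total q z with hqz | hzq
  · exact integral_nonneg hqz hpos
  · rw [integral_symm, ← integral_neg]
    exact integral_nonneg hzq fun x hx => neg_nonneg.2 (hneg x hx)

lemma MonotoneOn.integral_sub_le_one_add_mul {f r : ℝ → ℝ} {p m q K : ℝ}
    (hr : MonotoneOn r (Icc p q)) (hf : IntervalIntegrable f volume p q)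
    (hpm : p ≤ m) (hmq : m ≤ q) (hK : 0 ≤ K)
    (hflat : ∫ x in m..q, (f x - r m) ≤ K * ∫ x in p..m, (f x - r m)) :
    ∫ x in p..q, (f x - r x) ≤ (1 + K) * ∫ x in p..m, (f x - r x) := by
  have hm : m ∈ Icc p q := ⟨hpm, hmq⟩
  have hsub {a b : ℝ} (ha : p ≤ a) (hab : a ≤ b) (hb : b ≤ q) :
      IntervalIntegrable (fun x => f x - r x) volume a b ∧
        IntervalIntegrable (fun x => f x - r m) volume a b := by
    have hI : uIcc a b ⊆ uIcc p q := by
      rw [uIcc_of_le hab, uIcc_of_le (hpm.trans hmq)]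
      exact Icc_subset_Icc ha hb
    have hfab := hf.mono_set hI
    rw [← uIcc_of_le (hpm.trans hmq)] at hr
    exact ⟨hfab.sub (hr.mono hI).intervalIntegrable, hfab.sub intervalIntegrable_const⟩
  have hleft : ∫ x in p..m, (f x - r m) ≤ ∫ x in p..m, (f x - r x) :=
    integral_mono_on hpm (hsub le_rfl hpm hmq).2 (hsub le_rfl hpm hmq).1 fun x hx =>
      sub_le_sub_left (hr ⟨hx.1, hx.2.trans hmq⟩ hm hx.2) _
  have hright : ∫ x in m..q, (f x - r x) ≤ ∫ x in m..q, (f x - r m) :=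
    integral_mono_on hmq (hsub hpm hmq le_rfl).1 (hsub hpm hmq le_rfl).2 fun x hx =>
      sub_le_sub_left (hr hm ⟨hpm.trans hx.1, hx.2⟩ hx.1) _
  rw [← integral_add_adjacent_intervals (hsub le_rfl hpm hmq).1 (hsub hpm hmq le_rfl).1]
  linarith [mul_le_mul_of_nonneg_left hleft hK]

lemma integral_mul_one_sub_rpow_sub_const_le {lam0 a c ρ m q : ℝ} (hlam0 : 0 < lam0)
    (ha : 1 ≤ a) (hc : 0 ≤ c) (hm : m < 1) (hq : q ≤ 1) (hρ : 0 ≤ ρ)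
    (heq : ρ = lam0 * (1 - m) ^ a - c * m * (lam0 * (1 - m) ^ (a - 1))) :
    ∫ x in m..q, (lam0 * (1 - x) ^ a - ρ)
      ≤ c / (a + 1) * ∫ x in 0..m, (lam0 * (1 - x) ^ a - ρ) := by
  have ha0 : 0 < a := by linarith
  obtain ⟨s, hs, rfl⟩ : ∃ s, 0 ≤ s ∧ ρ = lam0 * s ^ a :=
    ⟨(ρ / lam0) ^ a⁻¹, by positivity, by
      rw [rpow_inv_rpow (by positivity) ha0.ne', mul_div_cancel₀ _ hlam0.ne']⟩
  have hpow := continuous_one_sub_rpow ha0.le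
  have hcont : Continuous fun x : ℝ => lam0 * (1 - x) ^ a - lam0 * s ^ a := by fun_prop
  have hI (p q : ℝ) : ∫ x in p..q, (lam0 * (1 - x) ^ a - lam0 * s ^ a)
      = lam0 * (((1 - p) ^ (a + 1) - (1 - q) ^ (a + 1)) / (a + 1) - (q - p) * s ^ a) := by
    simp_rw [← mul_sub]
    rw [integral_const_mul, integral_sub (hpow.intervalIntegrable p q) intervalIntegrable_const,
      integral_one_sub_rpow (by linarith), integral_const, smul_eq_mul]
  have hsurplus : (1 - m) ^ a - s ^ a = c * (1 - (1 - m)) * (1 - m) ^ (a - 1) := by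
    rw [sub_sub_cancel]
    exact mul_left_cancel₀ hlam0.ne' (by linear_combination -heq)
  calc ∫ x in m..q, (lam0 * (1 - x) ^ a - lam0 * s ^ a)
      ≤ ∫ x in m..(1 - s), (lam0 * (1 - x) ^ a - lam0 * s ^ a) := by
        refine integral_le_integral_of_sign_change (hcont.intervalIntegrable _ _)
          (hcont.intervalIntegrable _ _) (fun x hx => ?_) (fun x hx => ?_)
        · have : s ^ a ≤ (1 - x) ^ a := rpow_le_rpow hs (by linarith [hx.2]) ha0.le
          exact sub_nonneg.2 (mul_le_mul_of_nonneg_left this hlam0.le)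
        · have : (1 - x) ^ a ≤ s ^ a :=
            rpow_le_rpow (by linarith [hx.2]) (by linarith [hx.1]) ha0.le
          exact sub_nonpos.2 (mul_le_mul_of_nonneg_left this hlam0.le)
    _ ≤ lam0 * (c / (a + 1) * ((1 - (1 - m) ^ (a + 1)) / (a + 1) - (1 - (1 - m)) * s ^ a)) := by
        rw [hI, sub_sub_cancel, sub_right_comm]
        exact mul_le_mul_of_nonneg_left (rpow_surplus_le hs (by linarith) ha hc hsurplus) hlam0.le
    _ = c / (a + 1) * ∫ x in 0..m, (lam0 * (1 - x) ^ a - lam0 * s ^ a) := by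
        rw [hI, sub_zero, one_rpow]; ring

theorem efficiency_bound_ced_general
    (lam r : ℝ → ℝ) (lam0 a : ℝ) (hlam0 : 0 < lam0) (ha : 1 ≤ a)
    (hlam : ∀ x ∈ Set.Icc (0:ℝ) 1, lam x = lam0 * (1 - x) ^ a)
    (hr0 : ∀ x ∈ Set.Icc (0:ℝ) 1, 0 ≤ r x)
    (hrmono : MonotoneOn r (Set.Icc (0:ℝ) 1))
    (M : ℕ)
    (xt : ℝ) (hxt : xt ∈ Set.Ioo (0:ℝ) 1)
    (heq : r xt = lam xt - M * a * xt * (lam0 * (1 - xt) ^ (a - 1)))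
    (xs : ℝ) (hxs : xs ∈ Set.Icc xt 1) :
    ∫ x in (0:ℝ)..xs, (lam x - r x) ≤
      (1 + (M : ℝ) * a / (a + 1)) * ∫ x in (0:ℝ)..xt, (lam x - r x) := by
  have hxt' : xt ∈ Icc 0 1 := Ioo_subset_Icc_self hxt
  have hlam_int {y : ℝ} (hy : y ∈ Icc 0 1) :
      ∫ x in 0..y, (lam x - r x) = ∫ x in 0..y, (lam0 * (1 - x) ^ a - r x) :=
    integral_congr fun x hx => by
      rw [uIcc_of_le hy.1] at hx
      simp only [hlam x ⟨hx.1, hx.2.trans hy.2⟩]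
  rw [hlam_int ⟨hxt'.1.trans hxs.1, hxs.2⟩, hlam_int hxt']
  have hcont : Continuous fun x : ℝ => lam0 * (1 - x) ^ a :=
    continuous_const.mul (continuous_one_sub_rpow (by linarith))
  have hflat := integral_mul_one_sub_rpow_sub_const_le (c := M * a) hlam0 ha (by positivity)
    hxt.2 hxs.2 (hr0 xt hxt') (by rw [heq, hlam xt hxt'])
  exact (hrmono.mono (Icc_subset_Icc_right hxs.2)).integral_sub_le_one_add_mul
    (hcont.intervalIntegrable _ _) hxt'.1 hxs.1 (by positivity) hflat

/-- Efficiency bound `1 + M·α/(α+1)` for constant-elasticity inverse demand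
`lam x = λ₀ (1−x)^α`. -/
theorem efficiency_bound_ced
    (lam r : ℝ → ℝ) (lam0 a : ℝ) (hlam0 : 0 < lam0) (ha : 1 ≤ a)
    (hlam : ∀ x ∈ Set.Icc (0:ℝ) 1, lam x = lam0 * (1 - x) ^ a)
    (hr0 : ∀ x ∈ Set.Icc (0:ℝ) 1, 0 ≤ r x)
    (hrmono : MonotoneOn r (Set.Icc (0:ℝ) 1))
    (M : ℕ) (hM : 1 ≤ M)
    (xt : ℝ) (hxt : xt ∈ Set.Ioo (0:ℝ) 1)
    (heq : r xt = lam xt - M * a * xt * (lam0 * (1 - xt) ^ (a - 1)))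
    (xs : ℝ) (hxs : xs ∈ Set.Icc xt 1)
    (hopt : r xs ≤ lam xs) :
    ∫ x in (0:ℝ)..xs, (lam x - r x) ≤
      (1 + (M : ℝ) * a / (a + 1)) * ∫ x in (0:ℝ)..xt, (lam x - r x) :=
  efficiency_bound_ced_general lam r lam0 a hlam0 ha hlam hr0 hrmono M xt hxt heq xs hxs
end

section
/- Suppose λ and r satisfy λ(x) − r(x) = |ln(x/a)|^{1/α} for all x ∈ (0,a], where a > 0 and α ≥ 1, with λ differentiable, non-increasing and r non-decreasing. If x̃ ∈ (0,a) satisfies λ(x̃) − r(x̃) = M·x̃·|λ'(x̃)| for integer M ≥ 1, then x̃ ≥ a·e^{−M/α}; consequently, if x* ≤ a is the optimal flow magnitude, then x*/x̃ ≤ e^{M/α}. -/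
/-!
On `(0, a)` the net demand `λ - r` equals `L(x)^(1/α)` with `L(x) = log (a/x)`, whose slope is
`-(1/α) L^(1/α - 1) / x`. Since `λ` falls and `r` rises, `|λ'(x̃)|` is at most the magnitude of
that slope, so the equilibrium condition gives `L^(1/α) ≤ (M/α) L^(1/α - 1)` at `x̃`, i.e.
`log (a/x̃) ≤ M/α`. Exponentiating gives the lower bound on `x̃`, and `x* ≤ a` the ratio bound.
-/

open Real Set Filter Topology

theorem HasDerivAt.abs_le_neg_of_antitoneOn_sub_monotoneOn {f g : ℝ → ℝ} {s : Set ℝ}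
    {x f' d : ℝ} (hs : IsOpen s) (hx : x ∈ s) (hf : AntitoneOn f s) (hg : MonotoneOn g s)
    (hf' : HasDerivAt f f' x) (hd : HasDerivAt (fun y => f y - g y) d x) : |f'| ≤ -d := by
  have hacc : AccPt x (𝓟 s) := hs.preperfect x hx
  have hf'_nonpos : f' ≤ 0 := hf'.hasDerivWithinAt.nonpos_of_antitoneOn hacc hf
  have hg' : HasDerivAt g (f' - d) x :=
    (hf'.sub hd).congr_of_eventuallyEq (.of_forall fun y => by simp)
  have hg'_nonneg : 0 ≤ f' - d := hg'.hasDerivWithinAt.nonneg_of_monotoneOn hacc hg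
  rw [abs_of_nonpos hf'_nonpos]
  linarith

theorem hasDerivAt_abs_log_div_rpow {a x : ℝ} (p : ℝ) (hx : 0 < x) (hxa : x < a) :
    HasDerivAt (fun y => |log (y / a)| ^ p) (-(p * |log (x / a)| ^ (p - 1) / x)) x := by
  have ha : 0 < a := hx.trans hxa
  have hneg : ∀ y ∈ Ioo 0 a, log (y / a) < 0 := fun y hy =>
    log_neg (div_pos hy.1 ha) ((div_lt_one ha).2 hy.2)
  have habs : ∀ y ∈ Ioo 0 a, |log (y / a)| = -log (y / a) := fun y hy => abs_of_neg (hneg y hy)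
  have hlog : HasDerivAt (fun y => -log (y / a)) (-((1 / a) / (x / a))) x :=
    (((hasDerivAt_id x).div_const a).log (div_pos hx ha).ne').neg
  have hpow := hlog.rpow_const (p := p) (Or.inl (neg_ne_zero.2 (hneg x ⟨hx, hxa⟩).ne))
  rw [← habs x ⟨hx, hxa⟩] at hpow
  refine (hpow.congr_of_eventuallyEq ?_).congr_deriv ?_
  · filter_upwards [Ioo_mem_nhds hx hxa] with y hy
    rw [habs y hy]
  · field_simp

theorem le_of_rpow_le_mul_rpow_sub_one {L K p : ℝ} (hL : 0 < L) (h : L ^ p ≤ K * L ^ (p - 1)) :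
    L ≤ K := by
  rw [rpow_sub_one hL.ne', mul_div_assoc', le_div_iff₀ hL, mul_comm (L ^ p)] at h
  exact le_of_mul_le_mul_right h (rpow_pos_of_pos hL p)

theorem div_le_exp_of_abs_log_div_le {a x c : ℝ} (ha : 0 < a) (hx : 0 < x)
    (h : |log (x / a)| ≤ c) : a / x ≤ exp c := by
  rw [← log_le_iff_le_exp (div_pos ha hx), ← inv_div, log_inv]
  exact (neg_le_abs _).trans h

theorem mul_exp_neg_le_of_div_le_exp {a x c : ℝ} (hx : 0 < x) (h : a / x ≤ exp c) :
    a * exp (-c) ≤ x := by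
  rw [exp_neg, ← div_eq_mul_inv, div_le_iff₀ (exp_pos c), mul_comm]
  exact (div_le_iff₀ hx).1 h

theorem ratio_bound_log_demand_general
    (lam r : ℝ → ℝ) (a α : ℝ)
    (hnet : ∀ x ∈ Set.Ioc 0 a, lam x - r x = |Real.log (x / a)| ^ (1 / α))
    (hdiff : ∀ x ∈ Set.Ioc 0 a, DifferentiableAt ℝ lam x)
    (hanti : AntitoneOn lam (Set.Ioc 0 a))
    (hrmono : MonotoneOn r (Set.Ioc 0 a))
    (M : ℕ)
    (xt : ℝ) (hxt : xt ∈ Set.Ioo 0 a)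
    (heq : lam xt - r xt = M * xt * |deriv lam xt|) :
    a * Real.exp (-(M : ℝ) / α) ≤ xt ∧
      ∀ xs : ℝ, xs ≤ a → xs / xt ≤ Real.exp ((M : ℝ) / α) := by
  obtain ⟨hxt0, hxta⟩ := hxt
  have ha : 0 < a := hxt0.trans hxta
  set L := |log (xt / a)|
  have hL_pos : 0 < L := abs_pos.2 (log_neg (div_pos hxt0 ha) ((div_lt_one ha).2 hxta)).ne
  have hnet_deriv : HasDerivAt (fun y => lam y - r y) (-(1 / α * L ^ (1 / α - 1) / xt)) xt :=
    (hasDerivAt_abs_log_div_rpow (1 / α) hxt0 hxta).congr_of_eventuallyEq <| by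
      filter_upwards [Ioo_mem_nhds hxt0 hxta] with y hy using hnet y ⟨hy.1, hy.2.le⟩
  have hslope : |deriv lam xt| ≤ 1 / α * L ^ (1 / α - 1) / xt := by
    simpa using (hdiff xt ⟨hxt0, hxta.le⟩).hasDerivAt.abs_le_neg_of_antitoneOn_sub_monotoneOn
      isOpen_Ioo ⟨hxt0, hxta⟩ (hanti.mono Ioo_subset_Ioc_self)
      (hrmono.mono Ioo_subset_Ioc_self) hnet_deriv
  have hL : L ≤ M / α := by
    refine le_of_rpow_le_mul_rpow_sub_one (p := 1 / α) hL_pos ?_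
    calc L ^ (1 / α) = M * xt * |deriv lam xt| := (hnet xt ⟨hxt0, hxta.le⟩).symm.trans heq
      _ ≤ M * xt * (1 / α * L ^ (1 / α - 1) / xt) := by gcongr
      _ = M / α * L ^ (1 / α - 1) := by field_simp
  have hratio : a / xt ≤ exp (M / α) := div_le_exp_of_abs_log_div_le ha hxt0 hL
  refine ⟨?_, fun xs hxs => (div_le_div_of_nonneg_right hxs hxt0.le).trans hratio⟩
  simpa only [neg_div] using mul_exp_neg_le_of_div_le_exp hxt0 hratio

/-- Logarithmic net demand: if `lam x − r x = |ln(x/a)|^(1/α)` on `(0,a]`, then the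
equilibrium magnitude satisfies `x̃ ≥ a·e^(−M/α)`, and hence for any optimal magnitude
`x* ≤ a` the ratio `x*/x̃` is at most `e^(M/α)`. -/
theorem ratio_bound_log_demand
    (lam r : ℝ → ℝ) (a α : ℝ) (ha : 0 < a) (hα : 1 ≤ α)
    (hnet : ∀ x ∈ Set.Ioc 0 a, lam x - r x = |Real.log (x / a)| ^ (1 / α))
    (hdiff : ∀ x ∈ Set.Ioc 0 a, DifferentiableAt ℝ lam x)
    (hanti : AntitoneOn lam (Set.Ioc 0 a))
    (hrmono : MonotoneOn r (Set.Ioc 0 a))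
    (M : ℕ) (hM : 1 ≤ M)
    (xt : ℝ) (hxt : xt ∈ Set.Ioo 0 a)
    (heq : lam xt - r xt = M * xt * |deriv lam xt|) :
    a * Real.exp (-(M : ℝ) / α) ≤ xt ∧
      ∀ xs : ℝ, xs ≤ a → xs / xt ≤ Real.exp ((M : ℝ) / α) :=
  ratio_bound_log_demand_general lam r a α hnet hdiff hanti hrmono M xt hxt heq
end

section
/- Let λ be a positive, non-increasing, differentiable MPE function (x·|λ'(x)|/λ(x) non-decreasing) with strictly positive r that is non-decreasing. Suppose x̃ < x* satisfies λ(x̃) − r(x̃) = M·x̃·|λ'(x̃)| with λ'(x̃) < 0 and M ≥ 1 an integer, where λ(x̃) ≥ r(x̃). Then for all x > x̃ (with x ≤ x*): λ(x) − r(x) < M·x·|λ'(x)|, and for all 0 < x < x̃: λ(x) − r(x) > M·x·|λ'(x)|. -/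
/-!
Divided by `λ x > 0`, the first-order condition compares the Lerner index `1 - r / λ` with
`M` times the elasticity `x |λ'| / λ`. The elasticity is non-decreasing (MPE), while the Lerner
index is below its value at `x̃` to the right of `x̃` and above it to the left, since `r` is
positive and non-decreasing and `λ` is strictly smaller to the right of `x̃` and strictly larger
to the left: a tie `λ x = λ x̃` would make `λ` constant between `x` and `x̃`, so that `x̃` is a
local extremum of the antitone `λ` and `λ'(x̃) = 0`.
-/

open Set Filter Topology

noncomputable def elasticity (f : ℝ → ℝ) (x : ℝ) : ℝ := x * |deriv f x| / f x

section StrictAtDeriv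

variable {f : ℝ → ℝ} {s : Set ℝ} {c x : ℝ}

lemma AntitoneOn.apply_lt_of_deriv_ne_zero (hf : AntitoneOn f s) (hs : s.OrdConnected)
    (hc : s ∈ 𝓝 c) (hd : deriv f c ≠ 0) (hx : x ∈ s) (hcx : c < x) : f x < f c := by
  refine (hf (mem_of_mem_nhds hc) hx hcx.le).lt_of_ne fun heq => hd ?_
  refine IsLocalMin.deriv_eq_zero <|
    mem_of_superset (inter_mem hc (Iio_mem_nhds hcx)) fun y ⟨hy, hyx⟩ => ?_
  rcases le_total y c with hyc | hcy
  · exact hf hy (mem_of_mem_nhds hc) hyc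
  · exact heq ▸ hf (hs.out (mem_of_mem_nhds hc) hx ⟨hcy, hyx.le⟩) hx hyx.le

lemma AntitoneOn.lt_apply_of_deriv_ne_zero (hf : AntitoneOn f s) (hs : s.OrdConnected)
    (hc : s ∈ 𝓝 c) (hd : deriv f c ≠ 0) (hx : x ∈ s) (hxc : x < c) : f c < f x := by
  refine (hf hx (mem_of_mem_nhds hc) hxc.le).lt_of_ne' fun heq => hd ?_
  refine IsLocalMax.deriv_eq_zero <|
    mem_of_superset (inter_mem hc (Ioi_mem_nhds hxc)) fun y ⟨hy, hxy⟩ => ?_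
  rcases le_total y c with hyc | hcy
  · exact heq ▸ hf hx (hs.out hx (mem_of_mem_nhds hc) ⟨hxy.le, hyc⟩) hxy.le
  · exact hf (mem_of_mem_nhds hc) hy hcy

end StrictAtDeriv

lemma sub_div_self_lt_sub_div_self {l L ρ R : ℝ} (hRρ : R ≤ ρ) (hρ : 0 < ρ) (hl : 0 < l)
    (hlL : l < L) : (l - ρ) / l < (L - R) / L := by
  rw [sub_div, sub_div, div_self hl.ne', div_self (hl.trans hlL).ne']
  exact sub_lt_sub_left (div_lt_div₀' hRρ hlL hρ hl) 1

section FirstOrderCondition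

variable {f r : ℝ → ℝ} {a x : ℝ}

lemma mul_mul_abs_deriv_div (a : ℝ) :
    a * x * |deriv f x| / f x = a * elasticity f x := by
  rw [elasticity, mul_assoc, mul_div_assoc]

lemma sub_lt_mul_mul_abs_deriv_iff (hx : 0 < f x) :
    f x - r x < a * x * |deriv f x| ↔ (f x - r x) / f x < a * elasticity f x := by
  rw [← mul_mul_abs_deriv_div a, div_lt_div_iff_of_pos_right hx]

lemma mul_mul_abs_deriv_lt_sub_iff (hx : 0 < f x) :
    a * x * |deriv f x| < f x - r x ↔ a * elasticity f x < (f x - r x) / f x := by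
  rw [← mul_mul_abs_deriv_div a, div_lt_div_iff_of_pos_right hx]

end FirstOrderCondition

theorem equilibrium_unique_sign_change_general
    (lam r : ℝ → ℝ) (xs : ℝ)
    (hpos : ∀ x ∈ Set.Ioc 0 xs, 0 < lam x)
    (hanti : AntitoneOn lam (Set.Ioc 0 xs))
    (hMPE : MonotoneOn (fun x => x * |deriv lam x| / lam x) (Set.Ioc 0 xs))
    (hrpos : ∀ x ∈ Set.Ioc 0 xs, 0 < r x)
    (hrmono : MonotoneOn r (Set.Ioc 0 xs))
    (M : ℕ)
    (xt : ℝ) (hxt : xt ∈ Set.Ioc 0 xs) (hxtlt : xt < xs)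
    (hlam' : deriv lam xt < 0)
    (heq : lam xt - r xt = M * xt * |deriv lam xt|) :
    (∀ x, xt < x → x ≤ xs → lam x - r x < M * x * |deriv lam x|) ∧
    (∀ x, 0 < x → x < xt → M * x * |deriv lam x| < lam x - r x) := by
  have hnhds : Ioc 0 xs ∈ 𝓝 xt :=
    mem_of_superset (Ioo_mem_nhds hxt.1 hxtlt) Ioo_subset_Ioc_self
  have hfoc : (lam xt - r xt) / lam xt = M * elasticity lam xt := by
    rw [heq, mul_mul_abs_deriv_div]
  constructor
  · intro x hxtx hxxs
    have hx : x ∈ Ioc 0 xs := ⟨hxt.1.trans hxtx, hxxs⟩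
    rw [sub_lt_mul_mul_abs_deriv_iff (hpos x hx)]
    calc (lam x - r x) / lam x < (lam xt - r xt) / lam xt :=
          sub_div_self_lt_sub_div_self (hrmono hxt hx hxtx.le) (hrpos x hx) (hpos x hx)
            (hanti.apply_lt_of_deriv_ne_zero ordConnected_Ioc hnhds hlam'.ne hx hxtx)
      _ = M * elasticity lam xt := hfoc
      _ ≤ M * elasticity lam x := by gcongr; exact hMPE hxt hx hxtx.le
  · intro x hx0 hxxt
    have hx : x ∈ Ioc 0 xs := ⟨hx0, hxxt.le.trans hxt.2⟩
    rw [mul_mul_abs_deriv_lt_sub_iff (hpos x hx)]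
    calc M * elasticity lam x ≤ M * elasticity lam xt := by gcongr; exact hMPE hx hxt hxxt.le
      _ = (lam xt - r xt) / lam xt := hfoc.symm
      _ < (lam x - r x) / lam x :=
          sub_div_self_lt_sub_div_self (hrmono hx hxt hxxt.le) (hrpos xt hxt) (hpos xt hxt)
            (hanti.lt_apply_of_deriv_ne_zero ordConnected_Ioc hnhds hlam'.ne hx hxxt)

/-- Uniqueness of the equilibrium point: for MPE inverse demand with strictly positive,
non-decreasing `r`, the function `lam x − r x − M·x·|lam' x|` changes sign exactly once
at the equilibrium point `x̃`. -/
theorem equilibrium_unique_sign_change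
    (lam r : ℝ → ℝ) (xs : ℝ)
    (hpos : ∀ x ∈ Set.Ioc 0 xs, 0 < lam x)
    (hanti : AntitoneOn lam (Set.Ioc 0 xs))
    (hdiff : ∀ x ∈ Set.Ioc 0 xs, DifferentiableAt ℝ lam x)
    (hMPE : MonotoneOn (fun x => x * |deriv lam x| / lam x) (Set.Ioc 0 xs))
    (hrpos : ∀ x ∈ Set.Ioc 0 xs, 0 < r x)
    (hrmono : MonotoneOn r (Set.Ioc 0 xs))
    (M : ℕ) (hM : 1 ≤ M)
    (xt : ℝ) (hxt : xt ∈ Set.Ioc 0 xs) (hxtlt : xt < xs)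
    (hlam' : deriv lam xt < 0)
    (hge : r xt ≤ lam xt)
    (heq : lam xt - r xt = M * xt * |deriv lam xt|) :
    (∀ x, xt < x → x ≤ xs → lam x - r x < M * x * |deriv lam x|) ∧
    (∀ x, 0 < x → x < xt → M * x * |deriv lam x| < lam x - r x) :=
  equilibrium_unique_sign_change_general lam r xs hpos hanti hMPE hrpos hrmono M xt hxt hxtlt hlam'
    heq
end

section
/- Let λ(x) = x^{−1/r} with r > 1 on (0,∞), and let M be an integer with 1 ≤ M < r. Suppose prices on a path of M saturated-capacity sellers are each p_e* ≥ (1/M)·λ(x*), and consider the deviation profit π(x) = (p_e* + λ(x) − λ(x*))·x for x ≤ x*. Then π'(x) > 0 for all 0 < x ≤ x*, hence π(x) ≤ π(x*) for all x ∈ (0, x*]. -/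
/-! Since `x λ'(x) = -λ(x)/r`, the deviation profit has derivative
`π'(x) = p* - λ(x*) + (1 - 1/r) λ(x)`. As `λ` is decreasing, on `(0, x*]` this is at least
`p* - λ(x*)/r ≥ (1/M - 1/r) λ(x*) > 0`, so `π` increases up to `x*`. -/

open Real Set

lemma hasDerivAt_add_rpow_neg_mul (c s : ℝ) {x : ℝ} (hx : 0 < x) :
    HasDerivAt (fun y => (c + y ^ (-s)) * y) (c + (1 - s) * x ^ (-s)) x := by
  refine (((hasDerivAt_rpow_const (p := -s) (Or.inl hx.ne')).const_add c).mul
    (hasDerivAt_id x)).congr_deriv ?_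
  rw [rpow_sub_one hx.ne', id]
  field_simp
  ring

lemma hasDerivAt_price_deviation_profit {r : ℝ} {lam : ℝ → ℝ}
    (hlam : ∀ x : ℝ, 0 < x → lam x = x ^ (-(1 / r))) (p L : ℝ) {x : ℝ} (hx : 0 < x) :
    HasDerivAt (fun y => (p + lam y - L) * y) (p - L + (1 - 1 / r) * lam x) x := by
  rw [hlam x hx]
  refine (hasDerivAt_add_rpow_neg_mul (p - L) (1 / r) hx).congr_of_eventuallyEq ?_
  filter_upwards [Ioi_mem_nhds hx] with y hy
  rw [hlam y hy]
  ring

lemma price_deviation_profit_deriv_pos {r m : ℝ} {lam : ℝ → ℝ}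
    (hlam : ∀ x : ℝ, 0 < x → lam x = x ^ (-(1 / r))) (hm : 1 ≤ m) (hmr : m < r)
    {xs p : ℝ} (hxs : 0 < xs) (hp : (1 / m) * lam xs ≤ p) {x : ℝ} (hx : 0 < x)
    (hxle : x ≤ xs) :
    0 < p - lam xs + (1 - 1 / r) * lam x := by
  have hm0 : 0 < m := by linarith
  have hr : 0 < r := by linarith
  have hlam_pos : 0 < lam xs := by
    rw [hlam xs hxs]
    positivity
  have hlam_le : lam xs ≤ lam x := by
    rw [hlam xs hxs, hlam x hx]
    exact rpow_le_rpow_of_nonpos hx hxle (neg_nonpos.mpr (by positivity))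
  have hmarkup : 1 / r < 1 / m := one_div_lt_one_div_of_lt hm0 hmr
  have hm_inv : 1 / m ≤ 1 := by rw [div_le_one hm0]; exact hm
  nlinarith [mul_le_mul_of_nonneg_left hlam_le (by linarith : (0 : ℝ) ≤ 1 - 1 / r),
    mul_pos (sub_pos.mpr hmarkup) hlam_pos]

theorem capacitated_no_price_increase_general
    (r : ℝ) (M : ℕ) (hM : 1 ≤ M) (hMr : (M : ℝ) < r)
    (xs pe : ℝ) (hxs : 0 < xs)
    (lam : ℝ → ℝ) (hlam : ∀ x : ℝ, 0 < x → lam x = x ^ (-(1 / r)))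
    (hpe : (1 / (M : ℝ)) * lam xs ≤ pe) :
    (∀ x : ℝ, 0 < x → x ≤ xs →
      0 < deriv (fun y => (pe + lam y - lam xs) * y) x) ∧
    (∀ x : ℝ, 0 < x → x ≤ xs →
      (pe + lam x - lam xs) * x ≤ (pe + lam xs - lam xs) * xs) := by
  have hderiv := fun x (hx : 0 < x) => hasDerivAt_price_deviation_profit hlam pe (lam xs) hx
  have hpos := fun x (hx : 0 < x) (hxle : x ≤ xs) =>
    price_deviation_profit_deriv_pos hlam (by exact_mod_cast hM) hMr hxs hpe hx hxle
  refine ⟨fun x hx hxle => (hderiv x hx).deriv ▸ hpos x hx hxle, ?_⟩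
  have hmono : MonotoneOn (fun y => (pe + lam y - lam xs) * y) (Ioc 0 xs) := by
    refine monotoneOn_of_hasDerivWithinAt_nonneg (convex_Ioc 0 xs)
      (f' := fun x => pe - lam xs + (1 - 1 / r) * lam x)
      (fun x hx => (hderiv x hx.1).continuousAt.continuousWithinAt) ?_ ?_ <;>
      rw [interior_Ioc]
    · exact fun x hx => (hderiv x hx.1).hasDerivWithinAt
    · exact fun x hx => (hpos x hx.1 hx.2.le).le
  intro x hx hxle
  exact hmono ⟨hx, hxle⟩ ⟨hxs, le_rfl⟩ hxle

/-- Capacitated elastic demand `lam x = x^(−1/r)` with `r > 1` and `M < r`: a saturated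
monopoly charging `p* ≥ lam x*/M` cannot profit by raising its price; the deviation
profit `π(x) = (p* + lam x − lam x*)·x` has `π' > 0` on `(0,x*]`, so `π(x) ≤ π(x*)`. -/
theorem capacitated_no_price_increase
    (r : ℝ) (hr : 1 < r) (M : ℕ) (hM : 1 ≤ M) (hMr : (M : ℝ) < r)
    (xs pe : ℝ) (hxs : 0 < xs)
    (lam : ℝ → ℝ) (hlam : ∀ x : ℝ, 0 < x → lam x = x ^ (-(1 / r)))
    (hpe : (1 / (M : ℝ)) * lam xs ≤ pe) :
    (∀ x : ℝ, 0 < x → x ≤ xs →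
      0 < deriv (fun y => (pe + lam y - lam xs) * y) x) ∧
    (∀ x : ℝ, 0 < x → x ≤ xs →
      (pe + lam x - lam xs) * x ≤ (pe + lam xs - lam xs) * xs) :=
  capacitated_no_price_increase_general r M hM hMr xs pe hxs lam hlam hpe
end
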